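/- arXiv:1412.8726 — 3 statements merged into one kernel-verified Lean document; each statement's English description precedes it below -/
import Mathlib

section
/- Let r ↦ q^U(rℓ) be absolutely continuous with q^U(r_2 ℓ) - q^U(r_1 ℓ) = 2∫_{r_1}^{r_2} q^L(vℓ)/v dv for 0 < r_1 < r_2, where q^U(ξ) = ∫ ((ξ·h)^2 ∧ 1) μ(dh) and q^L(ξ) = ∫_{0<|ξ·h|≤1} (ξ·h)^2 μ(dh) for a Lévy measure μ on ℝ^n\{0} and unit vector ℓ. -/
/-!
For real `x`, the map `v ↦ min ((v * x) ^ 2) 1` has derivative `2 v x² 𝟙{|v x| ≤ 1}` away from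
the (at most two) kinks `|v x| = 1`, so its increments are integrals of that derivative. Take
`x = ⟪ℓ, h⟫` and integrate in `h`. For `v ∈ [r₁, r₂]` the derivative is bounded by
`(2 / r₁) max ((r₂ ‖ℓ‖)², 1) min (1, ‖h‖²)`, which is `μ`-integrable, and `μ` is σ-finite (it is
null at `0` and finite away from `0`), so Fubini swaps the two integrals. Finally
`2 v x² = 2 (v x)² / v`.
-/

open MeasureTheory Set
open scoped ENNReal

noncomputable def truncSqDeriv (x v : ℝ) : ℝ := if |v * x| ≤ 1 then 2 * v * x ^ 2 else 0

theorem measurable_truncSqDeriv : Measurable (Function.uncurry truncSqDeriv) := by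
  unfold truncSqDeriv
  exact Measurable.ite (measurableSet_le (by fun_prop) measurable_const) (by fun_prop)
    measurable_const

theorem abs_truncSqDeriv_le {v : ℝ} (hv : 0 < v) (x : ℝ) :
    |truncSqDeriv x v| ≤ 2 / v * min ((v * x) ^ 2) 1 := by
  unfold truncSqDeriv
  split_ifs with hx
  · rw [abs_of_nonneg (by positivity), min_eq_left ((sq_le_one_iff_abs_le_one _).2 hx)]
    field_simp
    rfl
  · rw [abs_zero]
    positivity

theorem hasDerivAt_min_sq_mul_one {x v : ℝ} (hv : |v * x| ≠ 1) :
    HasDerivAt (fun v => min ((v * x) ^ 2) 1) (truncSqDeriv x v) v := by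
  have hsq : HasDerivAt (fun v => (v * x) ^ 2) (2 * v * x ^ 2) v := by
    refine (((hasDerivAt_id' v).mul_const x).fun_pow 2).congr_deriv ?_
    norm_num
    ring
  have hcont : Continuous fun w : ℝ => |w * x| := by fun_prop
  rcases hv.lt_or_gt with hlt | hgt
  · rw [truncSqDeriv, if_pos hlt.le]
    refine hsq.congr_of_eventuallyEq ?_
    filter_upwards [hcont.continuousAt.eventually_lt continuousAt_const hlt] with w hw
    exact min_eq_left ((sq_le_one_iff_abs_le_one _).2 hw.le)
  · rw [truncSqDeriv, if_neg hgt.not_ge]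
    refine (hasDerivAt_const v (1 : ℝ)).congr_of_eventuallyEq ?_
    filter_upwards [continuousAt_const.eventually_lt hcont.continuousAt hgt] with w hw
    exact min_eq_right ((one_lt_sq_iff_one_lt_abs _).2 hw).le

theorem min_sq_mul_one_sub_eq_integral (x : ℝ) {r₁ r₂ : ℝ} (h : r₁ ≤ r₂) :
    min ((r₂ * x) ^ 2) 1 - min ((r₁ * x) ^ 2) 1 = ∫ v in r₁..r₂, truncSqDeriv x v := by
  have hkinks : {v : ℝ | |v * x| = 1}.Countable := by
    refine (((countable_singleton (1 / x)).insert (-1 / x))).mono fun v hv => ?_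
    have hx : x ≠ 0 := right_ne_zero_of_mul (by rw [← abs_ne_zero, hv]; exact one_ne_zero)
    rcases (abs_eq zero_le_one).1 hv with hv | hv
    · exact Or.inr (eq_div_of_mul_eq hx hv)
    · exact Or.inl (eq_div_of_mul_eq hx hv)
  have hint : IntervalIntegrable (truncSqDeriv x) volume r₁ r₂ := by
    have hcont : Continuous fun v : ℝ => 2 * v * x ^ 2 := by fun_prop
    refine (hcont.intervalIntegrable r₁ r₂).mono_fun
      (measurable_truncSqDeriv.comp measurable_prodMk_left).aestronglyMeasurable
      (ae_of_all _ fun v => ?_)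
    dsimp only
    unfold truncSqDeriv
    split_ifs
    · rfl
    · simp only [norm_zero, norm_nonneg]
  exact (integral_eq_of_hasDerivAt_off_countable_of_le _ _ h hkinks (by fun_prop)
    (fun v hv => hasDerivAt_min_sq_mul_one hv.2) hint).symm

theorem min_sq_mul_one_le (r x : ℝ) : min ((r * x) ^ 2) 1 ≤ max (r ^ 2) 1 * min 1 (x ^ 2) := by
  rcases le_total (x ^ 2) 1 with hx | hx
  · rw [min_eq_right hx]
    calc min ((r * x) ^ 2) 1 ≤ r ^ 2 * x ^ 2 := (min_le_left _ _).trans (mul_pow r x 2).le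
      _ ≤ max (r ^ 2) 1 * x ^ 2 := by gcongr; exact le_max_left _ _
  · rw [min_eq_left hx, mul_one]
    exact (min_le_right _ _).trans (le_max_right _ _)

theorem sigmaFinite_of_lintegral_lt_top {α : Type*} [MeasurableSpace α] {μ : Measure α}
    {f : α → ℝ≥0∞} (hf : AEMeasurable f μ) (hf₀ : μ {x | f x = 0} = 0)
    (hfi : ∫⁻ x, f x ∂μ < ∞) : SigmaFinite μ := by
  refine Measure.sigmaFinite_of_countable (S := insert {x | f x = 0}
    (range fun k : ℕ => {x | ((k + 1 : ℕ) : ℝ≥0∞)⁻¹ ≤ f x})) ((countable_range _).insert _) ?_ ?_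
  · rintro s (rfl | ⟨k, rfl⟩)
    · rw [hf₀]
      exact ENNReal.zero_lt_top
    · exact (meas_ge_le_lintegral_div hf (by simp) (by simp)).trans_lt
        (ENNReal.div_lt_top hfi.ne (by simp))
  · refine eq_univ_of_forall fun x => ?_
    by_cases hx : f x = 0
    · exact mem_sUnion_of_mem hx (mem_insert _ _)
    · obtain ⟨k, hk⟩ := ENNReal.exists_inv_nat_lt hx
      refine mem_sUnion_of_mem ?_ (mem_insert_of_mem _ ⟨k, rfl⟩)
      exact le_trans (ENNReal.inv_le_inv.2 (by simp)) hk.le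

section LinearFunctional

variable {E : Type*} [NormedAddCommGroup E] [NormedSpace ℝ E]

theorem min_sq_mul_apply_one_le (L : E →L[ℝ] ℝ) (r : ℝ) (h : E) :
    min ((r * L h) ^ 2) 1 ≤ max ((r * ‖L‖) ^ 2) 1 * min 1 (‖h‖ ^ 2) := by
  have hLh : |r * L h| ≤ |r * ‖L‖ * ‖h‖| := by
    rw [abs_mul, abs_mul, abs_mul, abs_norm, abs_norm, mul_assoc, ← Real.norm_eq_abs (L h)]
    exact mul_le_mul_of_nonneg_left (L.le_opNorm h) (abs_nonneg r)
  exact (min_le_min_right 1 (sq_le_sq.2 hLh)).trans (min_sq_mul_one_le _ _)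

variable [MeasurableSpace E] [OpensMeasurableSpace E] {μ : Measure E}

theorem integrable_min_sq_mul_apply_one (hμ : Integrable (fun h => min 1 (‖h‖ ^ 2)) μ)
    (L : E →L[ℝ] ℝ) (r : ℝ) : Integrable (fun h => min ((r * L h) ^ 2) 1) μ :=
  (hμ.const_mul _).mono' (by fun_prop) <| ae_of_all _ fun h => by
    rw [Real.norm_of_nonneg (by positivity)]
    exact min_sq_mul_apply_one_le L r h

theorem integral_truncSqDeriv_apply (L : E →L[ℝ] ℝ) {v : ℝ} (hv : v ≠ 0) :
    ∫ h, truncSqDeriv (L h) v ∂μ =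
      2 * (∫ h in {h | 0 < |v * L h| ∧ |v * L h| ≤ 1}, (v * L h) ^ 2 ∂μ) / v := by
  have hmeas : Measurable fun h => |v * L h| := by fun_prop
  have hS : MeasurableSet {h | 0 < |v * L h| ∧ |v * L h| ≤ 1} :=
    (measurableSet_lt measurable_const hmeas).inter (measurableSet_le hmeas measurable_const)
  rw [← integral_indicator hS, mul_div_right_comm, ← integral_const_mul]
  refine integral_congr_ae (ae_of_all _ fun h => ?_)
  by_cases hL : L h = 0
  · simp [truncSqDeriv, hL]
  · have hpos : 0 < |v * L h| := abs_pos.2 (mul_ne_zero hv hL)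
    simp only [truncSqDeriv, indicator, mem_ofPred_eq, hpos, true_and]
    split_ifs
    · field_simp
    · simp

theorem integrable_truncSqDeriv_apply [SFinite μ]
    (hμ : Integrable (fun h => min 1 (‖h‖ ^ 2)) μ) (L : E →L[ℝ] ℝ) {r₁ r₂ : ℝ} (h₁ : 0 < r₁)
    (h₁₂ : r₁ ≤ r₂) :
    Integrable (Function.uncurry fun v h => truncSqDeriv (L h) v)
      ((volume.restrict (uIoc r₁ r₂)).prod μ) := by
  rw [uIoc_of_le h₁₂]
  have hv : ∀ᵐ p : ℝ × E ∂(volume.restrict (Ioc r₁ r₂)).prod μ, p.1 ∈ Ioc r₁ r₂ :=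
    Measure.quasiMeasurePreserving_fst.ae (ae_restrict_mem measurableSet_Ioc)
  refine ((hμ.const_mul (2 / r₁ * max ((r₂ * ‖L‖) ^ 2) 1)).comp_snd _).mono'
    (measurable_truncSqDeriv.comp ((L.measurable.comp measurable_snd).prodMk
      measurable_fst)).aestronglyMeasurable ?_
  filter_upwards [hv] with ⟨v, h⟩ ⟨hv₁, hv₂⟩
  have hv₀ : 0 < v := h₁.trans hv₁
  calc ‖truncSqDeriv (L h) v‖ ≤ 2 / v * min ((v * L h) ^ 2) 1 := abs_truncSqDeriv_le hv₀ _
    _ ≤ 2 / v * (max ((v * ‖L‖) ^ 2) 1 * min 1 (‖h‖ ^ 2)) := by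
      gcongr
      exact min_sq_mul_apply_one_le L v h
    _ ≤ 2 / r₁ * max ((r₂ * ‖L‖) ^ 2) 1 * min 1 (‖h‖ ^ 2) := by
      rw [← mul_assoc]
      gcongr

theorem integral_min_sq_mul_apply_one_sub_eq [SFinite μ]
    (hμ : Integrable (fun h => min 1 (‖h‖ ^ 2)) μ) (L : E →L[ℝ] ℝ) {r₁ r₂ : ℝ} (h₁ : 0 < r₁)
    (h₁₂ : r₁ ≤ r₂) :
    ∫ h, min ((r₂ * L h) ^ 2) 1 ∂μ - ∫ h, min ((r₁ * L h) ^ 2) 1 ∂μ =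
      ∫ v in r₁..r₂, ∫ h, truncSqDeriv (L h) v ∂μ := by
  rw [← integral_sub (integrable_min_sq_mul_apply_one hμ L r₂)
    (integrable_min_sq_mul_apply_one hμ L r₁),
    intervalIntegral_integral_swap (integrable_truncSqDeriv_apply hμ L h₁ h₁₂)]
  simp_rw [min_sq_mul_one_sub_eq_integral _ h₁₂]

end LinearFunctional

theorem stmt11_general {n : ℕ} (μ : Measure (EuclideanSpace ℝ (Fin n)))
    (hμ0 : μ {0} = 0)
    (hμ : ∫⁻ h, ENNReal.ofReal (min 1 (‖h‖ ^ 2)) ∂μ < ⊤)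
    (ℓ : EuclideanSpace ℝ (Fin n)) :
    ∀ r₁ r₂ : ℝ, 0 < r₁ → r₁ < r₂ →
      (∫ h, min ((inner ℝ (r₂ • ℓ) h : ℝ) ^ 2) 1 ∂μ)
          - (∫ h, min ((inner ℝ (r₁ • ℓ) h : ℝ) ^ 2) 1 ∂μ)
        = 2 * ∫ v in r₁..r₂,
            (∫ h in {h | 0 < |(inner ℝ (v • ℓ) h : ℝ)| ∧ |(inner ℝ (v • ℓ) h : ℝ)| ≤ 1},
              (inner ℝ (v • ℓ) h : ℝ) ^ 2 ∂μ) / v := by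
  intro r₁ r₂ h₁ h₁₂
  have hmeas : Measurable fun h : EuclideanSpace ℝ (Fin n) => min 1 (‖h‖ ^ 2) := by fun_prop
  have hint : Integrable (fun h => min 1 (‖h‖ ^ 2)) μ :=
    (lintegral_ofReal_ne_top_iff_integrable hmeas.aestronglyMeasurable
      (ae_of_all _ fun h => by positivity)).1 hμ.ne
  have hzero : {h : EuclideanSpace ℝ (Fin n) | ENNReal.ofReal (min 1 (‖h‖ ^ 2)) = 0} = {0} := by
    ext h
    simp
  have : SigmaFinite μ :=
    sigmaFinite_of_lintegral_lt_top hmeas.ennreal_ofReal.aemeasurable (hzero ▸ hμ0) hμ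
  have key := integral_min_sq_mul_apply_one_sub_eq hint (innerSL ℝ ℓ) h₁ h₁₂.le
  simp only [innerSL_apply_apply] at key
  simp_rw [real_inner_smul_left]
  rw [key, ← intervalIntegral.integral_const_mul]
  refine intervalIntegral.integral_congr fun v hv => ?_
  have hv₀ : 0 < v := h₁.trans_le (uIcc_of_le h₁₂.le ▸ hv).1
  simpa only [innerSL_apply_apply, mul_div_assoc] using
    integral_truncSqDeriv_apply (μ := μ) (innerSL ℝ ℓ) hv₀.ne'

/-- Derivative identity along a ray for the upper symbol of a Lévy measure:
for a unit vector `ℓ` and `0 < r₁ < r₂`,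
`q^U(r₂ℓ) - q^U(r₁ℓ) = 2 ∫_{r₁}^{r₂} q^L(vℓ)/v dv`, where
`q^U(ξ) = ∫ ((ξ·h)² ∧ 1) μ(dh)` and `q^L(ξ) = ∫_{0<|ξ·h|≤1} (ξ·h)² μ(dh)`. -/
theorem stmt11 {n : ℕ} (μ : Measure (EuclideanSpace ℝ (Fin n)))
    (hμ0 : μ {0} = 0)
    (hμ : ∫⁻ h, ENNReal.ofReal (min 1 (‖h‖ ^ 2)) ∂μ < ⊤)
    (ℓ : EuclideanSpace ℝ (Fin n)) (hℓ : ‖ℓ‖ = 1) :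
    ∀ r₁ r₂ : ℝ, 0 < r₁ → r₁ < r₂ →
      (∫ h, min ((inner ℝ (r₂ • ℓ) h : ℝ) ^ 2) 1 ∂μ)
          - (∫ h, min ((inner ℝ (r₁ • ℓ) h : ℝ) ^ 2) 1 ∂μ)
        = 2 * ∫ v in r₁..r₂,
            (∫ h in {h | 0 < |(inner ℝ (v • ℓ) h : ℝ)| ∧ |(inner ℝ (v • ℓ) h : ℝ)| ≤ 1},
              (inner ℝ (v • ℓ) h : ℝ) ^ 2 ∂μ) / v :=
  stmt11_general μ hμ0 hμ ℓ
end

section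
/- Suppose q^*(r) := sup_{ℓ∈S^{n-1}} q^U(rℓ) satisfies q^*(r) ≤ κ inf_{ℓ∈S^{n-1}} q^L(rℓ) for all r ≥ 1 with some κ ≥ 1, where q^U, q^L are upper/lower symbols of a Lévy measure μ. Then q^*(r) ≥ c r^{2/κ} for all r ≥ 1, with c = q^*(1) (assuming q^*(1) > 0). -/
/-!
Fix a unit vector `ℓ` and write `U s = q^U(sℓ)`, `L s = q^L(sℓ)`. Integrating the elementary
identity `min ((b v)², 1) - min ((a v)², 1) = ∫_a^b (2/s) (s v)² 1{0 < |s v| ≤ 1} ds` against `μ`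
(Tonelli, legitimate once `μ` is restricted to `{0}ᶜ`, where the Lévy integrability makes it
σ-finite) gives `U b = U a + ∫_a^b 2 L s / s ds`, the integrated form of `U' = 2 L / s`. Hence `U`
is monotone, and the comparison `U a ≤ U s ≤ q^*(s) ≤ κ L s` on `[a, b]` gives
`U b ≥ (1 + (2/κ) log (b/a)) U a`. Chaining this over `N` equal steps of `log r` and letting
`N → ∞` yields `U r ≥ r^(2/κ) U 1`; the theorem follows by taking the supremum over `ℓ`.
-/

open MeasureTheory Set
open scoped ENNReal

theorem ofReal_exp_mul_mul_le_of_one_add_mul_mul_le {α : ℝ} (hα : 0 ≤ α) {g : ℝ → ℝ≥0∞}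
    (hg : ∀ t s, 0 ≤ t → 0 ≤ s → ENNReal.ofReal (1 + α * s) * g t ≤ g (t + s))
    {t : ℝ} (ht : 0 ≤ t) :
    ENNReal.ofReal (Real.exp (α * t)) * g 0 ≤ g t := by
  have hpow : ∀ s, 0 ≤ s → ∀ k : ℕ, ENNReal.ofReal (1 + α * s) ^ k * g 0 ≤ g (k * s) := by
    intro s hs k
    induction k with
    | zero => simp
    | succ k ih =>
      calc ENNReal.ofReal (1 + α * s) ^ (k + 1) * g 0
          = ENNReal.ofReal (1 + α * s) * (ENNReal.ofReal (1 + α * s) ^ k * g 0) := by ring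
        _ ≤ ENNReal.ofReal (1 + α * s) * g (k * s) := by gcongr
        _ ≤ g (k * s + s) := hg _ _ (by positivity) hs
        _ = g ((k + 1 : ℕ) * s) := by push_cast; ring_nf
  have hlim : Filter.Tendsto (fun N : ℕ => ENNReal.ofReal ((1 + α * t / N) ^ N) * g 0)
      Filter.atTop (nhds (ENNReal.ofReal (Real.exp (α * t)) * g 0)) :=
    ENNReal.Tendsto.mul_const
      ((ENNReal.continuous_ofReal.tendsto _).comp (Real.tendsto_one_add_div_pow_exp (α * t)))
      (.inl (by simp [Real.exp_pos]))
  refine le_of_tendsto hlim (Filter.eventually_atTop.2 ⟨1, fun N hN => ?_⟩)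
  have hN : (N : ℝ) ≠ 0 := by positivity
  calc ENNReal.ofReal ((1 + α * t / N) ^ N) * g 0
      = ENNReal.ofReal (1 + α * (t / N)) ^ N * g 0 := by
        rw [ENNReal.ofReal_pow (by positivity), mul_div_assoc]
    _ ≤ g (N * (t / N)) := hpow _ (by positivity) N
    _ = g t := by rw [mul_div_cancel₀ t hN]

theorem ofReal_rpow_mul_le_of_one_add_mul_log_mul_le {α : ℝ} (hα : 0 ≤ α) {f : ℝ → ℝ≥0∞}
    (hf : ∀ a b, 1 ≤ a → a ≤ b → ENNReal.ofReal (1 + α * Real.log (b / a)) * f a ≤ f b)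
    {r : ℝ} (hr : 1 ≤ r) :
    ENNReal.ofReal (r ^ α) * f 1 ≤ f r := by
  have hr0 : 0 < r := by linarith
  have := ofReal_exp_mul_mul_le_of_one_add_mul_mul_le hα (g := f ∘ Real.exp)
    (fun t s ht hs => by
      simpa [Real.exp_add, Real.exp_pos] using
        hf (Real.exp t) (Real.exp (t + s)) (Real.one_le_exp ht)
          (Real.exp_le_exp.2 (by linarith)))
    (Real.log_nonneg hr)
  simpa [Real.rpow_def_of_pos hr0, mul_comm, Real.exp_log hr0] using this

theorem lintegral_Ioc_ofReal_deriv_eq {f f' : ℝ → ℝ} {a b : ℝ} (hab : a ≤ b)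
    (hderiv : ∀ x ∈ Icc a b, HasDerivAt f (f' x) x) (hint : IntervalIntegrable f' volume a b)
    (hnonneg : ∀ x ∈ Ioc a b, 0 ≤ f' x) :
    ∫⁻ x in Ioc a b, ENNReal.ofReal (f' x) = ENNReal.ofReal (f b - f a) := by
  rw [← intervalIntegral.integral_eq_sub_of_hasDerivAt (by rwa [uIcc_of_le hab]) hint,
    intervalIntegral.integral_of_le hab,
    ofReal_integral_eq_lintegral_ofReal ((intervalIntegrable_iff_integrableOn_Ioc_of_le hab).1 hint)
      ((ae_restrict_iff' measurableSet_Ioc).2 (ae_of_all _ hnonneg))]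

theorem lintegral_Ioc_ofReal_div {c a b : ℝ} (hc : 0 ≤ c) (ha : 0 < a) (hab : a ≤ b) :
    ∫⁻ s in Ioc a b, ENNReal.ofReal (c / s) = ENNReal.ofReal (c * Real.log (b / a)) := by
  have hpos : ∀ x ∈ Icc a b, 0 < x := fun x hx => ha.trans_le hx.1
  rw [lintegral_Ioc_ofReal_deriv_eq (f := fun s => c * Real.log s) (f' := fun s => c / s) hab
    (fun x hx => by simpa [div_eq_mul_inv] using
      (Real.hasDerivAt_log (hpos x hx).ne').const_mul c)
    (ContinuousOn.intervalIntegrable_of_Icc hab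
      (continuousOn_const.div continuousOn_id fun x hx => (hpos x hx).ne'))
    (fun x hx => div_nonneg hc (hpos x (Ioc_subset_Icc_self hx)).le),
    Real.log_div (hpos b ⟨hab, le_rfl⟩).ne' ha.ne', mul_sub]

theorem ofReal_one_add_mul_log_div_mul_le {U L : ℝ → ℝ≥0∞} {κ : ℝ} (hκ : 0 < κ)
    (hUL : ∀ a b, 1 ≤ a → a ≤ b → U b = U a + ∫⁻ s in Ioc a b, ENNReal.ofReal (2 / s) * L s)
    (hcomp : ∀ s, 1 ≤ s → U s ≤ ENNReal.ofReal κ * L s) {a b : ℝ} (ha : 1 ≤ a) (hab : a ≤ b) :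
    ENNReal.ofReal (1 + 2 / κ * Real.log (b / a)) * U a ≤ U b := by
  have ha0 : 0 < a := by linarith
  have hlow : ∀ s ∈ Ioc a b, ENNReal.ofReal (2 / κ / s) * U a ≤ ENNReal.ofReal (2 / s) * L s := by
    rintro s ⟨has, -⟩
    have hs0 : 0 < s := ha0.trans has
    calc ENNReal.ofReal (2 / κ / s) * U a
        ≤ ENNReal.ofReal (2 / κ / s) * (ENNReal.ofReal κ * L s) := by
          gcongr
          calc U a ≤ U s := by rw [hUL a s ha has.le]; exact le_self_add
            _ ≤ ENNReal.ofReal κ * L s := hcomp s (by linarith)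
      _ = ENNReal.ofReal (2 / s) * L s := by
          rw [← mul_assoc, ← ENNReal.ofReal_mul (by positivity)]
          congr 2
          field_simp
  calc ENNReal.ofReal (1 + 2 / κ * Real.log (b / a)) * U a
      = U a + ENNReal.ofReal (2 / κ * Real.log (b / a)) * U a := by
        rw [ENNReal.ofReal_add zero_le_one
          (by have := Real.log_nonneg ((one_le_div ha0).2 hab); positivity),
          ENNReal.ofReal_one, add_mul, one_mul]
    _ = U a + ∫⁻ s in Ioc a b, ENNReal.ofReal (2 / κ / s) * U a := by
        rw [lintegral_mul_const _ (by fun_prop),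
          lintegral_Ioc_ofReal_div (by positivity) ha0 hab]
    _ ≤ U a + ∫⁻ s in Ioc a b, ENNReal.ofReal (2 / s) * L s := by
        gcongr U a + ?_
        exact setLIntegral_mono' measurableSet_Ioc hlow
    _ = U b := (hUL a b ha hab).symm

theorem ofReal_min_sq_one_eq_lintegral (v : ℝ) {r : ℝ} (hr : 0 ≤ r) :
    ENNReal.ofReal (min ((r * v) ^ 2) 1) =
      ∫⁻ s in Ioc 0 r, ENNReal.ofReal (2 / s) *
        {x : ℝ | 0 < |x| ∧ |x| ≤ 1}.indicator (fun x => ENNReal.ofReal (x ^ 2)) (s * v) := by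
  rcases eq_or_ne v 0 with rfl | hv
  · simp
  have hv' : 0 < |v| := abs_pos.2 hv
  have hkernel : EqOn
      (fun s => ENNReal.ofReal (2 / s) *
        {x : ℝ | 0 < |x| ∧ |x| ≤ 1}.indicator (fun x => ENNReal.ofReal (x ^ 2)) (s * v))
      ((Iic |v|⁻¹).indicator fun s => ENNReal.ofReal (2 * s * v ^ 2)) (Ioc 0 r) := by
    rintro s ⟨hs, -⟩
    have hmem : s * v ∈ {x : ℝ | 0 < |x| ∧ |x| ≤ 1} ↔ s ∈ Iic |v|⁻¹ := by
      simp only [mem_ofPred_eq, mem_Iic, abs_mul, abs_of_pos hs, ← one_div,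
        le_div_iff₀ hv', mul_pos hs hv', true_and]
    dsimp only
    by_cases h : s ∈ Iic |v|⁻¹
    · rw [indicator_of_mem h, indicator_of_mem (hmem.2 h), ← ENNReal.ofReal_mul (by positivity)]
      congr 1
      field_simp
    · rw [indicator_of_notMem h, indicator_of_notMem (mt hmem.1 h), mul_zero]
  rw [setLIntegral_congr_fun measurableSet_Ioc hkernel, lintegral_indicator measurableSet_Iic,
    Measure.restrict_restrict measurableSet_Iic, inter_comm, Ioc_inter_Iic,
    lintegral_Ioc_ofReal_deriv_eq (f := fun s => s ^ 2 * v ^ 2) (le_min hr (by positivity))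
      (fun x _ => by simpa using ((hasDerivAt_pow 2 x).mul_const (v ^ 2)))
      ((by fun_prop : Continuous fun s : ℝ => 2 * s * v ^ 2).intervalIntegrable _ _)
      (fun x hx => by have := hx.1; positivity)]
  congr 1
  have hvinv : |v|⁻¹ * |v| = 1 := inv_mul_cancel₀ hv'.ne'
  rcases le_total r |v|⁻¹ with h | h
  · have : |r * v| ≤ 1 := by
      rw [abs_mul, abs_of_nonneg hr]
      nlinarith
    rw [min_eq_left h, min_eq_left (by nlinarith [sq_abs (r * v), abs_nonneg (r * v)])]
    ring
  · have : 1 ≤ |r * v| := by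
      rw [abs_mul, abs_of_nonneg hr]
      nlinarith
    rw [min_eq_right h, min_eq_right (by nlinarith [sq_abs (r * v), abs_nonneg (r * v)])]
    nlinarith [sq_abs v]

theorem ofReal_min_sq_one_eq_add_lintegral (v : ℝ) {a b : ℝ} (ha : 0 ≤ a) (hab : a ≤ b) :
    ENNReal.ofReal (min ((b * v) ^ 2) 1) = ENNReal.ofReal (min ((a * v) ^ 2) 1) +
      ∫⁻ s in Ioc a b, ENNReal.ofReal (2 / s) *
        {x : ℝ | 0 < |x| ∧ |x| ≤ 1}.indicator (fun x => ENNReal.ofReal (x ^ 2)) (s * v) := by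
  rw [ofReal_min_sq_one_eq_lintegral v (ha.trans hab), ofReal_min_sq_one_eq_lintegral v ha,
    ← Ioc_union_Ioc_eq_Ioc ha hab,
    lintegral_union measurableSet_Ioc (Ioc_disjoint_Ioc_of_le le_rfl)]

section Symbols

variable {α : Type*} [MeasurableSpace α]

noncomputable def upperSymbol (μ : Measure α) (w : α → ℝ) (s : ℝ) : ℝ≥0∞ :=
  ∫⁻ x, ENNReal.ofReal (min ((s * w x) ^ 2) 1) ∂μ

noncomputable def lowerSymbol (μ : Measure α) (w : α → ℝ) (s : ℝ) : ℝ≥0∞ :=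
  ∫⁻ x in {x | 0 < |s * w x| ∧ |s * w x| ≤ 1}, ENNReal.ofReal ((s * w x) ^ 2) ∂μ

variable {μ : Measure α} {w : α → ℝ}

theorem sigmaFinite_restrict_support {f : α → ℝ≥0∞} (hf : Measurable f)
    (hfi : ∫⁻ x, f x ∂μ ≠ ∞) : SigmaFinite (μ.restrict (Function.support f)) := by
  refine Measure.sigmaFinite_of_countable
    (S := insert (Function.support f)ᶜ (range fun n : ℕ => {x | ((n : ℝ≥0∞) + 1)⁻¹ ≤ f x}))
    ((countable_range _).insert _) ?_ ?_
  · rintro _ (rfl | ⟨n, rfl⟩)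
    · simp [Measure.restrict_apply' (measurableSet_support hf)]
    · calc _ ≤ μ {x | ((n : ℝ≥0∞) + 1)⁻¹ ≤ f x} := Measure.restrict_le_self _
        _ ≤ (∫⁻ x, f x ∂μ) / ((n : ℝ≥0∞) + 1)⁻¹ :=
          meas_ge_le_lintegral_div hf.aemeasurable (by simp) (by simp)
        _ < ∞ := ENNReal.div_lt_top hfi (by simp)
  · refine eq_univ_of_forall fun x => ?_
    by_cases hx : f x = 0
    · exact mem_sUnion_of_mem (show x ∈ (Function.support f)ᶜ by simpa) (mem_insert _ _)
    · obtain ⟨n, hn⟩ := ENNReal.exists_inv_nat_lt hx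
      refine mem_sUnion_of_mem ?_ (mem_insert_of_mem _ ⟨n, rfl⟩)
      exact (ENNReal.inv_le_inv.2 le_self_add).trans hn.le

theorem upperSymbol_eq_add_lintegral_lowerSymbol [SFinite μ] (hw : Measurable w) {a b : ℝ}
    (ha : 0 ≤ a) (hab : a ≤ b) :
    upperSymbol μ w b =
      upperSymbol μ w a + ∫⁻ s in Ioc a b, ENNReal.ofReal (2 / s) * lowerSymbol μ w s := by
  set T : Set ℝ := {x | 0 < |x| ∧ |x| ≤ 1}
  have hT : MeasurableSet T :=
    (measurableSet_lt measurable_const measurable_abs).inter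
      (measurableSet_le measurable_abs measurable_const)
  have hlower : ∀ s, lowerSymbol μ w s =
      ∫⁻ x, T.indicator (fun y => ENNReal.ofReal (y ^ 2)) (s * w x) ∂μ := fun s =>
    (lintegral_indicator (hT.preimage (measurable_const.mul hw)) _).symm
  simp only [upperSymbol, hlower]
  rw [lintegral_congr fun x => ofReal_min_sq_one_eq_add_lintegral (w x) ha hab,
    lintegral_add_left (by fun_prop), lintegral_lintegral_swap (by
      refine ((measurable_const.div measurable_snd).ennreal_ofReal.mul ?_).aemeasurable
      exact (Measurable.indicator (by fun_prop) hT).comp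
        (measurable_snd.mul (hw.comp measurable_fst)))]
  congr 1
  refine lintegral_congr fun s => lintegral_const_mul _ ?_
  exact (Measurable.indicator (by fun_prop) hT).comp (measurable_const.mul hw)

theorem ofReal_rpow_mul_upperSymbol_one_le [SFinite μ] (hw : Measurable w) {κ : ℝ}
    (hκ : 0 < κ) (hcomp : ∀ s, 1 ≤ s → upperSymbol μ w s ≤ ENNReal.ofReal κ * lowerSymbol μ w s)
    {r : ℝ} (hr : 1 ≤ r) :
    ENNReal.ofReal (r ^ (2 / κ)) * upperSymbol μ w 1 ≤ upperSymbol μ w r :=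
  ofReal_rpow_mul_le_of_one_add_mul_log_mul_le (by positivity)
    (fun _ _ ha hab => ofReal_one_add_mul_log_div_mul_le hκ
      (fun _ _ ha hab => upperSymbol_eq_add_lintegral_lowerSymbol hw (by linarith) hab)
      hcomp ha hab) hr

end Symbols

section InnerProductSpace

variable {E : Type*} [NormedAddCommGroup E] [MeasurableSpace E] (μ : Measure E)

theorem sigmaFinite_restrict_compl_zero [OpensMeasurableSpace E]
    (hμ : ∫⁻ h, ENNReal.ofReal (min 1 (‖h‖ ^ 2)) ∂μ ≠ ∞) : SigmaFinite (μ.restrict {0}ᶜ) := by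
  have hsupp : Function.support (fun h : E => ENNReal.ofReal (min 1 (‖h‖ ^ 2))) = {0}ᶜ := by
    ext h
    simp
  rw [← hsupp]
  exact sigmaFinite_restrict_support (by fun_prop) hμ

variable [InnerProductSpace ℝ E]

theorem lintegral_min_inner_smul_sq_eq_upperSymbol (ℓ : E) (s : ℝ) :
    ∫⁻ h, ENNReal.ofReal (min (inner ℝ (s • ℓ) h ^ 2) 1) ∂μ =
      upperSymbol (μ.restrict {0}ᶜ) (inner ℝ ℓ) s := by
  rw [upperSymbol, setLIntegral_eq_of_support_subset]
  · simp_rw [real_inner_smul_left]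
  · rintro h hh rfl
    simp at hh

theorem setLIntegral_inner_smul_sq_eq_lowerSymbol (ℓ : E) (s : ℝ) :
    ∫⁻ h in {h | 0 < |inner ℝ (s • ℓ) h| ∧ |inner ℝ (s • ℓ) h| ≤ 1},
        ENNReal.ofReal (inner ℝ (s • ℓ) h ^ 2) ∂μ =
      lowerSymbol (μ.restrict {0}ᶜ) (inner ℝ ℓ) s := by
  rw [lowerSymbol, Measure.restrict_restrict_of_subset]
  · simp_rw [real_inner_smul_left]
  · rintro h ⟨hpos, -⟩ rfl
    simp at hpos

end InnerProductSpace

theorem stmt12_general {n : ℕ}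
    (μ : Measure (EuclideanSpace ℝ (Fin n)))
    (hμ : ∫⁻ h, ENNReal.ofReal (min 1 (‖h‖ ^ 2)) ∂μ < ⊤)
    (κ : ℝ) (hκ : 1 ≤ κ)
    (qU qL : EuclideanSpace ℝ (Fin n) → ℝ≥0∞) (qstar : ℝ → ℝ≥0∞)
    (hqU : ∀ ξ, qU ξ = ∫⁻ h, ENNReal.ofReal (min ((inner ℝ ξ h : ℝ) ^ 2) 1) ∂μ)
    (hqL : ∀ ξ, qL ξ = ∫⁻ h in {h | 0 < |(inner ℝ ξ h : ℝ)| ∧ |(inner ℝ ξ h : ℝ)| ≤ 1},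
        ENNReal.ofReal ((inner ℝ ξ h : ℝ) ^ 2) ∂μ)
    (hqstar : ∀ r : ℝ, qstar r
        = ⨆ ℓ : {ℓ : EuclideanSpace ℝ (Fin n) // ‖ℓ‖ = 1},
            qU (r • (ℓ : EuclideanSpace ℝ (Fin n))))
    (hcomp : ∀ r : ℝ, 1 ≤ r →
        qstar r ≤ ENNReal.ofReal κ *
          ⨅ ℓ : {ℓ : EuclideanSpace ℝ (Fin n) // ‖ℓ‖ = 1},
            qL (r • (ℓ : EuclideanSpace ℝ (Fin n)))) :
    ∀ r : ℝ, 1 ≤ r → qstar 1 * ENNReal.ofReal (r ^ (2 / κ)) ≤ qstar r := by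
  have := sigmaFinite_restrict_compl_zero μ hμ.ne
  intro r hr
  rw [hqstar, hqstar, mul_comm, ENNReal.mul_iSup]
  refine iSup_le fun ℓ => le_iSup_of_le ℓ ?_
  have hdir : ∀ s : ℝ, 1 ≤ s → qU (s • (ℓ : EuclideanSpace ℝ (Fin n))) ≤
      ENNReal.ofReal κ * qL (s • (ℓ : EuclideanSpace ℝ (Fin n))) := fun s hs =>
    calc qU (s • (ℓ : EuclideanSpace ℝ (Fin n))) ≤ qstar s := by
          rw [hqstar]
          exact le_iSup_of_le ℓ le_rfl
      _ ≤ _ := hcomp s hs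
      _ ≤ _ := by
          gcongr
          exact iInf_le _ ℓ
  simp only [hqU, hqL, lintegral_min_inner_smul_sq_eq_upperSymbol,
    setLIntegral_inner_smul_sq_eq_lowerSymbol] at hdir ⊢
  exact ofReal_rpow_mul_upperSymbol_one_le (by fun_prop) (by linarith) hdir hr

/-- If `q^*(r) = sup_{‖ℓ‖=1} q^U(rℓ)` satisfies
`q^*(r) ≤ κ inf_{‖ℓ‖=1} q^L(rℓ)` for all `r ≥ 1` (with `κ ≥ 1`), then
`q^*(r) ≥ q^*(1) · r^{2/κ}` for all `r ≥ 1`, provided `q^*(1) > 0`. -/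
theorem stmt12 {n : ℕ} (hn : 1 ≤ n)
    (μ : Measure (EuclideanSpace ℝ (Fin n))) (hμ0 : μ {0} = 0)
    (hμ : ∫⁻ h, ENNReal.ofReal (min 1 (‖h‖ ^ 2)) ∂μ < ⊤)
    (κ : ℝ) (hκ : 1 ≤ κ)
    (qU qL : EuclideanSpace ℝ (Fin n) → ℝ≥0∞) (qstar : ℝ → ℝ≥0∞)
    (hqU : ∀ ξ, qU ξ = ∫⁻ h, ENNReal.ofReal (min ((inner ℝ ξ h : ℝ) ^ 2) 1) ∂μ)
    (hqL : ∀ ξ, qL ξ = ∫⁻ h in {h | 0 < |(inner ℝ ξ h : ℝ)| ∧ |(inner ℝ ξ h : ℝ)| ≤ 1},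
        ENNReal.ofReal ((inner ℝ ξ h : ℝ) ^ 2) ∂μ)
    (hqstar : ∀ r : ℝ, qstar r
        = ⨆ ℓ : {ℓ : EuclideanSpace ℝ (Fin n) // ‖ℓ‖ = 1},
            qU (r • (ℓ : EuclideanSpace ℝ (Fin n))))
    (hcomp : ∀ r : ℝ, 1 ≤ r →
        qstar r ≤ ENNReal.ofReal κ *
          ⨅ ℓ : {ℓ : EuclideanSpace ℝ (Fin n) // ‖ℓ‖ = 1},
            qL (r • (ℓ : EuclideanSpace ℝ (Fin n))))
    (hpos : 0 < qstar 1) :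
    ∀ r : ℝ, 1 ≤ r → qstar 1 * ENNReal.ofReal (r ^ (2 / κ)) ≤ qstar r :=
  stmt12_general μ hμ κ hκ qU qL qstar hqU hqL hqstar hcomp
end

section
/- Let ϖ be a finite Borel measure on ℝ^n with ϖ(B(x,r)) ≤ C r^{θ-ε} for all x and r > 0 (and ε < θ), and let p_t(x,y) ≤ C' ρ_t^n (f_up(ρ_t ·) * Q_t)(y-x) for t ∈ (0,1] with f_up(z) = a_3 e^{-a_4|z|}, Q_t sub-probability measures, and ρ_t ≤ c t^{-1/α}. If θ - ε > n - α, then ∫_0^1 ∫ p_t(x,y) ϖ(dy) dt is bounded uniformly in x; in particular for n = 2 one gets ∫_0^1 sup_x ∫ p_t(x,y) ϖ(dy) dt ≤ c'' ∫_0^1 t^{-(θ-2+ε')/α} dt < ∞ when 2 - θ + ε' < α. -/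
open MeasureTheory Set

/-!
At a fixed time, Tonelli and `Q t univ ≤ 1` reduce the spatial integral of the kernel bound to
`sup_w ∫ exp (-a₄ ρ_t |w - y|) ϖ(dy)`. Cutting `ϖ` into the shells
`{k ≤ a₄ ρ_t |w - y| < k + 1}`, each inside a ball of radius `(k + 1) / (a₄ ρ_t)`, the Frostman
bound gives `≲ (a₄ ρ_t)^{-(θ-ε)}`; trivially it is also `≤ ϖ(ℝⁿ)`. Together with the factor
`ρ_tⁿ` this yields `∫ p_t(x,y) ϖ(dy) ≲ 1 + ρ_t^{max(n-θ+ε, 0)} ≲ 1 + t^{-max(n-θ+ε, 0)/α}`,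
which is integrable on `(0,1]` since `n - θ + ε < α`.
-/

theorem summable_add_one_rpow_mul_exp_neg (s : ℝ) :
    Summable fun k : ℕ => ((k : ℝ) + 1) ^ s * Real.exp (-k) := by
  set N := ⌈s⌉₊
  have hshift : Summable fun k : ℕ => ((k : ℝ) + 1) ^ N * Real.exp (-((k : ℝ) + 1)) := by
    have := (summable_nat_add_iff 1).2 (Real.summable_pow_mul_exp_neg_nat_mul N one_pos)
    simpa only [Nat.cast_add, Nat.cast_one, neg_one_mul] using this
  refine (hshift.mul_left (Real.exp 1)).of_nonneg_of_le (fun k => by positivity) fun k => ?_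
  have hpow : ((k : ℝ) + 1) ^ s ≤ ((k : ℝ) + 1) ^ N := by
    rw [← Real.rpow_natCast]
    exact Real.rpow_le_rpow_of_exponent_le (by linarith [k.cast_nonneg (α := ℝ)]) (Nat.le_ceil s)
  have hexp : Real.exp (-k) = Real.exp 1 * Real.exp (-((k : ℝ) + 1)) := by
    rw [← Real.exp_add]; ring_nf
  rw [hexp, mul_left_comm]
  gcongr

theorem ofReal_integral_le_lintegral_ofReal {α : Type*} [MeasurableSpace α] {μ : Measure α}
    {f : α → ℝ} (hf : 0 ≤ f) : ENNReal.ofReal (∫ a, f a ∂μ) ≤ ∫⁻ a, ENNReal.ofReal (f a) ∂μ := by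
  by_cases hfi : Integrable f μ
  · exact (ofReal_integral_eq_lintegral_ofReal hfi (ae_of_all _ hf)).le
  · simp [integral_undef hfi]

theorem lintegral_exp_neg_mul_dist_le {X : Type*} [PseudoMetricSpace X] [MeasurableSpace X]
    (μ : Measure X) {C s : ℝ} (hC : 0 ≤ C)
    (hμ : ∀ x, ∀ r : ℝ, 0 < r → μ (Metric.ball x r) ≤ ENNReal.ofReal (C * r ^ s))
    {b : ℝ} (hb : 0 < b) (w : X) :
    ∫⁻ y, ENNReal.ofReal (Real.exp (-(b * dist w y))) ∂μ ≤
      ENNReal.ofReal (C * (∑' k : ℕ, ((k : ℝ) + 1) ^ s * Real.exp (-k)) * b ^ (-s)) := by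
  set shell : ℕ → Set X := fun k => {y | ⌊b * dist w y⌋₊ = k}
  have hcover : (⋃ k, shell k) = univ := eq_univ_of_forall fun y => mem_iUnion.2 ⟨_, rfl⟩
  have hterm : ∀ k : ℕ, ∫⁻ y in shell k, ENNReal.ofReal (Real.exp (-(b * dist w y))) ∂μ ≤
      ENNReal.ofReal (C * b ^ (-s) * (((k : ℝ) + 1) ^ s * Real.exp (-k))) := by
    intro k
    have hball : shell k ⊆ Metric.ball w ((k + 1) / b) := fun y hy => by
      have := Nat.lt_floor_add_one (b * dist w y)
      rw [hy] at this
      rw [Metric.mem_ball', lt_div_iff₀ hb]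
      linarith
    have hexp : ∀ y ∈ shell k,
        ENNReal.ofReal (Real.exp (-(b * dist w y))) ≤ ENNReal.ofReal (Real.exp (-k)) := by
      intro y hy
      have : (k : ℝ) ≤ b * dist w y := hy ▸ Nat.floor_le (by positivity)
      gcongr
    calc ∫⁻ y in shell k, ENNReal.ofReal (Real.exp (-(b * dist w y))) ∂μ
        ≤ ∫⁻ _ in shell k, ENNReal.ofReal (Real.exp (-k)) ∂μ :=
          setLIntegral_mono measurable_const hexp
      _ = ENNReal.ofReal (Real.exp (-k)) * μ (shell k) := setLIntegral_const _ _
      _ ≤ ENNReal.ofReal (Real.exp (-k)) * ENNReal.ofReal (C * ((k + 1) / b) ^ s) := by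
          gcongr
          exact (measure_mono hball).trans (hμ _ _ (by positivity))
      _ = ENNReal.ofReal (C * b ^ (-s) * (((k : ℝ) + 1) ^ s * Real.exp (-k))) := by
          rw [← ENNReal.ofReal_mul (by positivity), Real.div_rpow (by positivity) hb.le,
            Real.rpow_neg hb.le]
          ring_nf
  calc ∫⁻ y, ENNReal.ofReal (Real.exp (-(b * dist w y))) ∂μ
      = ∫⁻ y in ⋃ k, shell k, ENNReal.ofReal (Real.exp (-(b * dist w y))) ∂μ := by
        rw [hcover, Measure.restrict_univ]
    _ ≤ ∑' k, ∫⁻ y in shell k, ENNReal.ofReal (Real.exp (-(b * dist w y))) ∂μ :=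
        lintegral_iUnion_le _ _
    _ ≤ ∑' k : ℕ, ENNReal.ofReal (C * b ^ (-s) * (((k : ℝ) + 1) ^ s * Real.exp (-k))) :=
        ENNReal.tsum_le_tsum hterm
    _ = ENNReal.ofReal (C * (∑' k : ℕ, ((k : ℝ) + 1) ^ s * Real.exp (-k)) * b ^ (-s)) := by
        rw [← ENNReal.ofReal_tsum_of_nonneg (fun k => by positivity)
          ((summable_add_one_rpow_mul_exp_neg s).mul_left _), tsum_mul_left]
        ring_nf

theorem lintegral_exp_neg_mul_dist_le_measureReal_univ {X : Type*} [PseudoMetricSpace X]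
    [MeasurableSpace X] (μ : Measure X) [IsFiniteMeasure μ] {b : ℝ} (hb : 0 ≤ b) (w : X) :
    ∫⁻ y, ENNReal.ofReal (Real.exp (-(b * dist w y))) ∂μ ≤ ENNReal.ofReal (μ.real univ) := by
  rw [ofReal_measureReal]
  calc ∫⁻ y, ENNReal.ofReal (Real.exp (-(b * dist w y))) ∂μ ≤ ∫⁻ _, 1 ∂μ := by
        refine lintegral_mono fun y => ENNReal.ofReal_le_one.2 (Real.exp_le_one_iff.2 ?_)
        simp only [Left.neg_nonpos_iff]
        positivity
    _ = μ univ := by rw [lintegral_const, one_mul]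

theorem integral_le_of_le_integral_exp_neg_mul_norm {E : Type*} [NormedAddCommGroup E]
    [MeasurableSpace E] [BorelSpace E] [SecondCountableTopology E]
    (ϖ Q : Measure E) [SFinite ϖ] (hQ : Q univ ≤ 1) {f : E → ℝ} (hf0 : 0 ≤ f)
    {A b B : ℝ} (hA : 0 ≤ A) (hB : 0 ≤ B) (x : E)
    (hf : ∀ y, f y ≤ A * ∫ z, Real.exp (-(b * ‖y - x - z‖)) ∂Q)
    (hexp : ∀ w, ∫⁻ y, ENNReal.ofReal (Real.exp (-(b * dist w y))) ∂ϖ ≤ ENNReal.ofReal B) :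
    ∫ y, f y ∂ϖ ≤ A * B := by
  have : IsFiniteMeasure Q := ⟨hQ.trans_lt ENNReal.one_lt_top⟩
  set g : E → E → ENNReal := fun y z => ENNReal.ofReal (Real.exp (-(b * dist (x + z) y)))
  have hdist : ∀ y z, dist (x + z) y = ‖y - x - z‖ := fun y z => by
    rw [dist_comm, dist_eq_norm, sub_add_eq_sub_sub]
  have hg : Measurable (Function.uncurry g) :=
    ENNReal.measurable_ofReal.comp (by fun_prop : Continuous _).measurable
  rw [← ENNReal.ofReal_le_ofReal_iff (by positivity)]
  calc ENNReal.ofReal (∫ y, f y ∂ϖ)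
      ≤ ∫⁻ y, ENNReal.ofReal (f y) ∂ϖ := ofReal_integral_le_lintegral_ofReal hf0
    _ ≤ ∫⁻ y, ENNReal.ofReal A * ∫⁻ z, g y z ∂Q ∂ϖ := by
        refine lintegral_mono fun y => (ENNReal.ofReal_le_ofReal (hf y)).trans ?_
        rw [ENNReal.ofReal_mul hA]
        gcongr
        simp only [g, hdist]
        exact ofReal_integral_le_lintegral_ofReal fun z => (Real.exp_pos _).le
    _ = ENNReal.ofReal A * ∫⁻ z, ∫⁻ y, g y z ∂ϖ ∂Q := by
        rw [lintegral_const_mul' _ _ ENNReal.ofReal_ne_top,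
          lintegral_lintegral_swap hg.aemeasurable]
    _ ≤ ENNReal.ofReal A * ∫⁻ _, ENNReal.ofReal B ∂Q := by
        gcongr with z
        exact hexp (x + z)
    _ ≤ ENNReal.ofReal A * ENNReal.ofReal B := by
        rw [lintegral_const]
        gcongr
        exact mul_le_of_le_one_right' hQ
    _ = ENNReal.ofReal (A * B) := (ENNReal.ofReal_mul hA).symm

theorem le_add_mul_rpow_max_of_le_pow_mul {F ρ A B s : ℝ} {n : ℕ} (hρ : 0 < ρ) (hA : 0 ≤ A)
    (hB : 0 ≤ B) (h₁ : F ≤ ρ ^ n * A) (h₂ : F ≤ ρ ^ n * (B * ρ ^ (-s))) :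
    F ≤ A + B * ρ ^ max ((n : ℝ) - s) 0 := by
  rcases le_or_gt ρ 1 with hρ1 | hρ1
  · have : ρ ^ n * A ≤ A := mul_le_of_le_one_left hA (pow_le_one₀ hρ.le hρ1)
    have : 0 ≤ B * ρ ^ max ((n : ℝ) - s) 0 := by positivity
    linarith
  · have hpow : ρ ^ n * (B * ρ ^ (-s)) = B * ρ ^ ((n : ℝ) - s) := by
      rw [← Real.rpow_natCast, sub_eq_add_neg, Real.rpow_add hρ]; ring
    have : ρ ^ ((n : ℝ) - s) ≤ ρ ^ max ((n : ℝ) - s) 0 :=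
      Real.rpow_le_rpow_of_exponent_le hρ1.le (le_max_left _ _)
    have : B * ρ ^ ((n : ℝ) - s) ≤ B * ρ ^ max ((n : ℝ) - s) 0 := by gcongr
    linarith

theorem integral_le_add_mul_rpow_of_le_integral_exp_neg {E : Type*} [NormedAddCommGroup E]
    [MeasurableSpace E] [BorelSpace E] [SecondCountableTopology E]
    (ϖ Q : Measure E) [IsFiniteMeasure ϖ] (hQ : Q univ ≤ 1) {C s : ℝ} (hC : 0 ≤ C)
    (hϖ : ∀ x, ∀ r : ℝ, 0 < r → ϖ (Metric.ball x r) ≤ ENNReal.ofReal (C * r ^ s))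
    {f : E → ℝ} (hf0 : 0 ≤ f) {D a ρ : ℝ} (hD : 0 ≤ D) (ha : 0 < a) (hρ : 0 < ρ) {n : ℕ} (x : E)
    (hf : ∀ y, f y ≤ D * ρ ^ n * ∫ z, Real.exp (-(a * ρ * ‖y - x - z‖)) ∂Q) :
    ∫ y, f y ∂ϖ ≤ D * ϖ.real univ +
      D * (C * ∑' k : ℕ, ((k : ℝ) + 1) ^ s * Real.exp (-k)) * a ^ (-s) *
        ρ ^ max ((n : ℝ) - s) 0 := by
  have hK : 0 ≤ C * ∑' k : ℕ, ((k : ℝ) + 1) ^ s * Real.exp (-k) :=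
    mul_nonneg hC (tsum_nonneg fun k => by positivity)
  have h₁ := integral_le_of_le_integral_exp_neg_mul_norm ϖ Q hQ hf0 (by positivity)
    measureReal_nonneg x hf (lintegral_exp_neg_mul_dist_le_measureReal_univ ϖ (by positivity))
  have h₂ := integral_le_of_le_integral_exp_neg_mul_norm ϖ Q hQ hf0 (by positivity)
    (by positivity) x hf (lintegral_exp_neg_mul_dist_le ϖ hC hϖ (by positivity))
  refine le_add_mul_rpow_max_of_le_pow_mul hρ (by positivity) (by positivity) ?_ ?_
  · exact h₁.trans_eq (by ring)
  · exact h₂.trans_eq (by rw [Real.mul_rpow ha.le hρ.le]; ring)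

theorem stmt14_general {n : ℕ} (α θ ε C C' c a₃ a₄ : ℝ)
    (hα : 0 < α) (hC : 0 < C) (hC' : 0 < C')
    (hc : 0 < c) (ha₃ : 0 < a₃) (ha₄ : 0 < a₄)
    (hcond : (n : ℝ) - α < θ - ε)
    (ϖ : Measure (EuclideanSpace ℝ (Fin n))) [IsFiniteMeasure ϖ]
    (hϖ : ∀ x, ∀ r : ℝ, 0 < r → ϖ (Metric.ball x r) ≤ ENNReal.ofReal (C * r ^ (θ - ε)))
    (ρ : ℝ → ℝ) (hρpos : ∀ t ∈ Set.Ioc (0 : ℝ) 1, 0 < ρ t)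
    (hρ : ∀ t ∈ Set.Ioc (0 : ℝ) 1, ρ t ≤ c * t ^ (-1 / α))
    (Q : ℝ → Measure (EuclideanSpace ℝ (Fin n)))
    (hQ : ∀ t : ℝ, Q t Set.univ ≤ 1)
    (p : ℝ → EuclideanSpace ℝ (Fin n) → EuclideanSpace ℝ (Fin n) → ℝ)
    (hp0 : ∀ t x y, 0 ≤ p t x y)
    (hp : ∀ t ∈ Set.Ioc (0 : ℝ) 1, ∀ x y,
        p t x y ≤ C' * ρ t ^ n *
          ∫ z, a₃ * Real.exp (-a₄ * (ρ t * ‖y - x - z‖)) ∂(Q t)) :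
    ∃ M : ℝ, ∀ x, (∫ t in Set.Ioc (0 : ℝ) 1, ∫ y, p t x y ∂ϖ) ≤ M := by
  set γ := max ((n : ℝ) - (θ - ε)) 0
  set A := C' * a₃ * ϖ.real univ
  set B := C' * a₃ * (C * ∑' k : ℕ, ((k : ℝ) + 1) ^ (θ - ε) * Real.exp (-k)) * a₄ ^ (-(θ - ε))
  have hB : 0 ≤ B := by positivity
  have hbound : ∀ x, ∀ t ∈ Ioc (0 : ℝ) 1, ∫ y, p t x y ∂ϖ ≤ A + B * c ^ γ * t ^ (-(γ / α)) := by
    intro x t ht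
    have hp' : ∀ y, p t x y ≤ C' * a₃ * ρ t ^ n * ∫ z, Real.exp (-(a₄ * ρ t * ‖y - x - z‖)) ∂Q t :=
      fun y => (hp t ht x y).trans_eq <| by
        rw [integral_const_mul]; simp only [neg_mul, mul_assoc]; ring
    have hργ : ρ t ^ γ ≤ c ^ γ * t ^ (-(γ / α)) :=
      calc ρ t ^ γ ≤ (c * t ^ (-1 / α)) ^ γ :=
          Real.rpow_le_rpow (hρpos t ht).le (hρ t ht) (le_max_right _ _)
        _ = c ^ γ * t ^ (-(γ / α)) := by
          rw [Real.mul_rpow hc.le (Real.rpow_nonneg ht.1.le _), ← Real.rpow_mul ht.1.le]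
          ring_nf
    calc ∫ y, p t x y ∂ϖ ≤ A + B * ρ t ^ γ :=
          integral_le_add_mul_rpow_of_le_integral_exp_neg ϖ (Q t) (hQ t) hC.le hϖ (hp0 t x)
            (by positivity) ha₄ (hρpos t ht) x hp'
      _ ≤ A + B * c ^ γ * t ^ (-(γ / α)) := by rw [mul_assoc B]; gcongr
  have hγ : -1 < -(γ / α) := by
    have : γ / α < 1 := (div_lt_one hα).2 (max_lt (by linarith) hα)
    linarith
  have hint : IntegrableOn (fun t : ℝ => A + B * c ^ γ * t ^ (-(γ / α))) (Ioc 0 1) :=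
    (integrableOn_const measure_Ioc_lt_top.ne).add
      (((intervalIntegrable_iff_integrableOn_Ioc_of_le zero_le_one).1
        (intervalIntegral.intervalIntegrable_rpow' hγ)).const_mul _)
  refine ⟨∫ t in Ioc (0 : ℝ) 1, A + B * c ^ γ * t ^ (-(γ / α)), fun x => ?_⟩
  exact integral_mono_of_nonneg (ae_of_all _ fun t => integral_nonneg (hp0 t x)) hint
    ((ae_restrict_iff' measurableSet_Ioc).2 (ae_of_all _ (hbound x)))

/-- If `ϖ` is a finite Frostman measure with `ϖ(B(x,r)) ≤ C r^{θ-ε}` and the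
transition density satisfies the compound-kernel upper bound
`p_t(x,y) ≤ C' ρ_t^n (f_up(ρ_t ·) * Q_t)(y-x)` with `f_up(z) = a₃ e^{-a₄|z|}`,
`ρ_t ≤ c t^{-1/α}`, and `θ - ε > n - α`, then `∫_0^1 ∫ p_t(x,y) ϖ(dy) dt`
is bounded uniformly in `x`. -/
theorem stmt14 {n : ℕ} (α θ ε C C' c a₃ a₄ : ℝ)
    (hα : 0 < α) (hε : 0 < ε) (hθε : ε < θ) (hC : 0 < C) (hC' : 0 < C')
    (hc : 0 < c) (ha₃ : 0 < a₃) (ha₄ : 0 < a₄)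
    (hcond : (n : ℝ) - α < θ - ε)
    (ϖ : Measure (EuclideanSpace ℝ (Fin n))) [IsFiniteMeasure ϖ]
    (hϖ : ∀ x, ∀ r : ℝ, 0 < r → ϖ (Metric.ball x r) ≤ ENNReal.ofReal (C * r ^ (θ - ε)))
    (ρ : ℝ → ℝ) (hρpos : ∀ t ∈ Set.Ioc (0 : ℝ) 1, 0 < ρ t)
    (hρ : ∀ t ∈ Set.Ioc (0 : ℝ) 1, ρ t ≤ c * t ^ (-1 / α))
    (Q : ℝ → Measure (EuclideanSpace ℝ (Fin n)))
    (hQ : ∀ t : ℝ, Q t Set.univ ≤ 1)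
    (p : ℝ → EuclideanSpace ℝ (Fin n) → EuclideanSpace ℝ (Fin n) → ℝ)
    (hp0 : ∀ t x y, 0 ≤ p t x y)
    (hp : ∀ t ∈ Set.Ioc (0 : ℝ) 1, ∀ x y,
        p t x y ≤ C' * ρ t ^ n *
          ∫ z, a₃ * Real.exp (-a₄ * (ρ t * ‖y - x - z‖)) ∂(Q t)) :
    ∃ M : ℝ, ∀ x, (∫ t in Set.Ioc (0 : ℝ) 1, ∫ y, p t x y ∂ϖ) ≤ M :=
  stmt14_general α θ ε C C' c a₃ a₄ hα hC hC' hc ha₃ ha₄ hcond ϖ hϖ ρ hρpos hρ Q hQ p hp0 hp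
end
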